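/- arXiv:2312.10000 — 3 statements merged into one kernel-verified Lean document; each statement's English description precedes it below -/
import Mathlib

section
/- Let λ be a cardinal, (p_n)_{n<ω} a sequence of conditions in the countable support product S^λ and (F_n)_{n<ω} a sequence with F_n a finite subset of dom(p_n), such that: (1) p_{n+1} ≤_{F_n,n} p_n for all n < ω; (2) F_n ⊆ F_{n+1} for all n < ω and ⋃_{n<ω} F_n = ⋃_{n<ω} dom(p_n). Then p := ⋂_{n<ω} p_n, defined by dom(p) := ⋃_{n<ω} dom(p_n) and p(α) := ⋂{p_n(α) : n < ω, α ∈ dom(p_n)}, is a condition in S^λ and p ≤_{F_n,n} p_n for all n < ω. -/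
/-- A tree on `2`: a set of finite binary sequences closed under initial segments. -/
def IsBinTree (T : Set (List Bool)) : Prop :=
  ∀ s ∈ T, ∀ t : List Bool, t <+: s → t ∈ T

/-- `s` is a splitting node of `T`. -/
def IsSplitNode (T : Set (List Bool)) (s : List Bool) : Prop :=
  s ∈ T ∧ s ++ [false] ∈ T ∧ s ++ [true] ∈ T

/-- `T` is a perfect tree (a condition of Sacks forcing). -/
def IsPerfectTree (T : Set (List Bool)) : Prop :=
  IsBinTree T ∧ T.Nonempty ∧ ∀ s ∈ T, ∃ t, s <+: t ∧ IsSplitNode T t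

/-- `t` is the (unique) minimal splitting node of `T` extending `s`, i.e. `t = sucspl_T(s)`. -/
def IsMinSplit (T : Set (List Bool)) (s t : List Bool) : Prop :=
  IsSplitNode T t ∧ s <+: t ∧ ∀ t', IsSplitNode T t' → s <+: t' → t <+: t'

/-- The `n`-th splitting level `spl_n(T)`. -/
def splLevel (T : Set (List Bool)) : ℕ → Set (List Bool)
  | 0 => {t | IsMinSplit T [] t}
  | n + 1 => {t | ∃ s ∈ splLevel T n, ∃ i : Bool, IsMinSplit T (s ++ [i]) t}

/-- `S ≤ₙ T` iff `S ⊆ T` and `spl_n(S) = spl_n(T)`. -/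
def SacksLeN (S T : Set (List Bool)) (n : ℕ) : Prop :=
  S ⊆ T ∧ splLevel S n = splLevel T n

/-- A condition of the countable support product `S^λ` (over the index type `ι` of size `λ`),
given by its domain `D` and values `f`: the domain is countable and all values on the domain
are perfect trees. -/
def IsCSCond {ι : Type*} (D : Set ι) (f : ι → Set (List Bool)) : Prop :=
  D.Countable ∧ ∀ α ∈ D, IsPerfectTree (f α)

/-- The ordering of `S^λ`: `(D₁, f₁) ≤ (D₂, f₂)` iff `D₂ ⊆ D₁` and
`f₁ α ⊆ f₂ α` for all `α ∈ D₂`. -/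
def CSLe {ι : Type*} (D₁ : Set ι) (f₁ : ι → Set (List Bool))
    (D₂ : Set ι) (f₂ : ι → Set (List Bool)) : Prop :=
  D₂ ⊆ D₁ ∧ ∀ α ∈ D₂, f₁ α ⊆ f₂ α

/-- `p ≤_{F,n} q` iff `p ≤ q` and `p(α) ≤ₙ q(α)` for all `α ∈ F`. -/
def CSLeFN {ι : Type*} (D₁ : Set ι) (f₁ : ι → Set (List Bool))
    (D₂ : Set ι) (f₂ : ι → Set (List Bool)) (F : Finset ι) (n : ℕ) : Prop :=
  CSLe D₁ f₁ D₂ f₂ ∧ ∀ α ∈ F, SacksLeN (f₁ α) (f₂ α) n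

/-!
On a splitting node `u` of a tree, the splitting level of `u` is the number of splitting nodes
strictly below `u`. This makes splitting levels local. If perfect trees `S ⊆ T` share level
`n + 1`, then every node of level `n` of either tree lies below a common node of level `n + 1`,
whose splitting predecessors in `S` and `T` agree by counting; so `S` and `T` share level `n`.
In a fusion sequence `T (m + 1) ≤ₘ T m`, every node of length at most `m` that splits in `T m`
has level at most `m`, hence lies on a level that is frozen from then on and splits in `⋂ T`.
So `⋂ T` has the same levels as the `T n`, and it is perfect. In the product, at a coordinate
`α ∈ F k` the trees `p (max m k) α` form such a fusion sequence with intersection `p(α)`, and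
every coordinate of the domain lies in some `F k`.
-/

open Set

namespace List

variable {α : Type*}

theorem exists_fork {u v : List α} (huv : ¬u <+: v) (hvu : ¬v <+: u) :
    ∃ w a b, a ≠ b ∧ w ++ [a] <+: u ∧ w ++ [b] <+: v ∧ ∀ x, x <+: u → x <+: v → x <+: w := by
  induction u generalizing v with
  | nil => exact absurd nil_prefix huv
  | cons a u ih =>
    cases v with
    | nil => exact absurd nil_prefix hvu
    | cons c v =>
      by_cases hac : a = c
      · subst hac
        simp only [cons_prefix_cons, true_and] at huv hvu
        obtain ⟨w, b, d, hbd, hwu, hwv, hmeet⟩ := ih huv hvu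
        refine ⟨a :: w, b, d, hbd, cons_prefix_cons.2 ⟨rfl, hwu⟩, cons_prefix_cons.2 ⟨rfl, hwv⟩, ?_⟩
        rintro (_ | ⟨e, x⟩) hxu hxv
        · exact nil_prefix
        · rw [cons_prefix_cons] at hxu hxv ⊢
          exact ⟨hxu.1, hmeet x hxu.2 hxv.2⟩
      · refine ⟨[], a, c, hac, by simp, by simp, ?_⟩
        rintro (_ | ⟨e, x⟩) hxu hxv
        · exact nil_prefix
        · rw [cons_prefix_cons] at hxu hxv
          exact absurd (hxu.1.symm.trans hxv.1) hac

theorem IsPrefix.prefix_of_not_concat_prefix {s t u : List α} {a : α} (ht : t <+: u)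
    (hsa : s ++ [a] <+: u) (h : ¬s ++ [a] <+: t) : t <+: s := by
  rcases prefix_or_prefix_of_prefix ht hsa with hts | hst
  · rcases prefix_concat_iff.1 hts with rfl | hts
    · exact absurd (prefix_refl _) h
    · exact hts
  · exact absurd hst h

theorem IsPrefix.length_lt_of_ne {s u : List α} (h : s <+: u) (hne : s ≠ u) :
    s.length < u.length :=
  lt_of_le_of_ne h.length_le fun hlen => hne (h.eq_of_length hlen)

theorem IsPrefix.exists_concat_prefix_of_ne {s u : List α} (h : s <+: u) (hne : s ≠ u) :
    ∃ a, s ++ [a] <+: u := by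
  obtain ⟨_ | ⟨a, r⟩, rfl⟩ := h
  · simp at hne
  · exact ⟨a, r, by simp⟩

theorem ne_of_concat_prefix {s u : List α} {a : α} (h : s ++ [a] <+: u) : s ≠ u := by
  rintro rfl
  simpa using h.length_le

end List

theorem ncard_le_length_of_forall_prefix_ne {α : Type*} {A : Set (List α)} {s : List α}
    (h : ∀ r ∈ A, r <+: s ∧ r ≠ s) : A.ncard ≤ s.length := by
  calc A.ncard ≤ (↑(Finset.range s.length) : Set ℕ).ncard :=
        ncard_le_ncard_of_injOn List.length
          (fun r hr => by simpa using (h r hr).1.length_lt_of_ne (h r hr).2)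
          fun r hr r' hr' hlen =>
            (List.prefix_of_prefix_length_le (h r hr).1 (h r' hr').1 hlen.le).eq_of_length hlen
    _ = s.length := by simp

theorem IsBinTree.isSplitNode_of_fork {T : Set (List Bool)} (hT : IsBinTree T) {w : List Bool}
    {a b : Bool} (hab : a ≠ b) (ha : w ++ [a] ∈ T) (hb : w ++ [b] ∈ T) : IsSplitNode T w := by
  refine ⟨hT _ ha _ (List.prefix_append _ _), ?_, ?_⟩ <;> cases a <;> cases b <;> simp_all

theorem IsPerfectTree.nil_mem {T : Set (List Bool)} (hT : IsPerfectTree T) : [] ∈ T :=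
  let ⟨s, hs⟩ := hT.2.1
  hT.1 s hs [] List.nil_prefix

theorem IsSplitNode.mono {S T : Set (List Bool)} (hST : S ⊆ T) {s : List Bool}
    (h : IsSplitNode S s) : IsSplitNode T s :=
  ⟨hST h.1, hST h.2.1, hST h.2.2⟩

theorem isSplitNode_iInter {T : ℕ → Set (List Bool)} {s : List Bool} :
    IsSplitNode (⋂ m, T m) s ↔ ∀ m, IsSplitNode (T m) s := by
  simp only [IsSplitNode, mem_iInter, forall_and]

theorem isSplitNode_of_mem_splLevel {T : Set (List Bool)} {n : ℕ} {t : List Bool}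
    (h : t ∈ splLevel T n) : IsSplitNode T t := by
  cases n with
  | zero => exact h.1
  | succ n => obtain ⟨s, -, i, hm⟩ := h; exact hm.1

def splitPrefixes (T : Set (List Bool)) (u : List Bool) : Set (List Bool) :=
  {t | t <+: u ∧ t ≠ u ∧ IsSplitNode T t}

section splitPrefixes

variable {S T : Set (List Bool)} {s t u x : List Bool}

theorem finite_splitPrefixes (T : Set (List Bool)) (u : List Bool) :
    (splitPrefixes T u).Finite :=
  (u.inits.toFinset.finite_toSet).subset fun t ht => by simpa using ht.1

theorem ncard_splitPrefixes_le_length : (splitPrefixes T u).ncard ≤ u.length :=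
  ncard_le_length_of_forall_prefix_ne fun _ ht => ⟨ht.1, ht.2.1⟩

theorem splitPrefixes_mono (hST : S ⊆ T) : splitPrefixes S u ⊆ splitPrefixes T u :=
  fun _ ht => ⟨ht.1, ht.2.1, ht.2.2.mono hST⟩

theorem splitPrefixes_subset_of_prefix (htu : t <+: u) : splitPrefixes T t ⊆ splitPrefixes T u :=
  fun _ hr => ⟨hr.1.trans htu, fun hru => hr.2.1 (hr.1.eq_of_length_le (hru ▸ htu.length_le)),
    hr.2.2⟩

theorem splitPrefixes_eq_insert (hs : s ∈ splitPrefixes T u)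
    (h : ∀ t ∈ splitPrefixes T u, t <+: s) : splitPrefixes T u = insert s (splitPrefixes T s) := by
  refine Subset.antisymm (fun t ht => ?_) (insert_subset hs (splitPrefixes_subset_of_prefix hs.1))
  by_cases hts : t = s
  · exact Or.inl hts
  · exact Or.inr ⟨h t ht, hts, ht.2.2⟩

theorem splitPrefixes_eq_of_prefix (hST : S ⊆ T) (htu : t <+: u)
    (h : splitPrefixes S u = splitPrefixes T u) : splitPrefixes S t = splitPrefixes T t := by
  refine Subset.antisymm (splitPrefixes_mono hST) fun r hr => ⟨hr.1, hr.2.1, ?_⟩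
  have hr' : r ∈ splitPrefixes S u := h ▸ splitPrefixes_subset_of_prefix htu hr
  exact hr'.2.2

theorem IsMinSplit.not_prefix_of_mem_splitPrefixes (h : IsMinSplit T x u)
    (ht : t ∈ splitPrefixes T u) : ¬x <+: t := fun hxt =>
  ht.2.1 (ht.1.eq_of_length_le (h.2.2 t ht.2.2 hxt).length_le)

theorem isMinSplit_iff (hT : IsBinTree T) :
    IsMinSplit T x u ↔ IsSplitNode T u ∧ x <+: u ∧ ∀ t ∈ splitPrefixes T u, ¬x <+: t := by
  refine ⟨fun h => ⟨h.1, h.2.1, fun _ => h.not_prefix_of_mem_splitPrefixes⟩, ?_⟩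
  rintro ⟨hu, hxu, hmin⟩
  refine ⟨hu, hxu, fun t ht hxt => ?_⟩
  by_contra hut
  by_cases htu : t <+: u
  · exact hmin t ⟨htu, fun h => hut (h ▸ List.prefix_refl t), ht⟩ hxt
  · -- `u` and `t` fork at a splitting node of `T` above `x`
    obtain ⟨w, a, b, hab, hwu, hwt, hmeet⟩ := List.exists_fork hut htu
    have hw : IsSplitNode T w := hT.isSplitNode_of_fork hab (hT _ hu.1 _ hwu) (hT _ ht.1 _ hwt)
    exact hmin w ⟨(List.prefix_append _ _).trans hwu, List.ne_of_concat_prefix hwu, hw⟩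
      (hmeet x hxu hxt)

theorem IsMinSplit.ncard_splitPrefixes_le (h : IsMinSplit T x u) :
    (splitPrefixes T u).ncard ≤ x.length :=
  ncard_le_length_of_forall_prefix_ne fun r hr => by
    rcases List.prefix_or_prefix_of_prefix hr.1 h.2.1 with hrx | hxr
    · exact ⟨hrx, fun hrx' => h.not_prefix_of_mem_splitPrefixes hr (hrx' ▸ List.prefix_refl r)⟩
    · exact absurd hxr (h.not_prefix_of_mem_splitPrefixes hr)

theorem mem_splLevel_iff (hT : IsBinTree T) {n : ℕ} :
    u ∈ splLevel T n ↔ IsSplitNode T u ∧ (splitPrefixes T u).ncard = n := by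
  induction n generalizing u with
  | zero =>
    simp only [splLevel, mem_ofPred_eq, isMinSplit_iff hT, List.nil_prefix, not_true_eq_false,
      true_and, ncard_eq_zero (finite_splitPrefixes T u), eq_empty_iff_forall_notMem]
  | succ n ih =>
    constructor
    · rintro ⟨s, hs, i, hsu⟩
      rw [ih] at hs
      have hsu' : s ∈ splitPrefixes T u :=
        ⟨(List.prefix_append _ _).trans hsu.2.1, List.ne_of_concat_prefix hsu.2.1, hs.1⟩
      have hP := splitPrefixes_eq_insert hsu' fun t ht =>
        ht.1.prefix_of_not_concat_prefix hsu.2.1 (hsu.not_prefix_of_mem_splitPrefixes ht)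
      refine ⟨hsu.1, ?_⟩
      rw [hP, ncard_insert_of_notMem (fun h => h.2.1 rfl) (finite_splitPrefixes T s), hs.2]
    · rintro ⟨hu, hcard⟩
      -- the parent of `u` is its longest splitting proper prefix
      obtain ⟨s, hs, hmax⟩ := (finite_splitPrefixes T u).exists_maximalFor List.length _
        (nonempty_of_ncard_ne_zero (by omega))
      have hbelow : ∀ t ∈ splitPrefixes T u, t <+: s := fun t ht => by
        rcases List.prefix_or_prefix_of_prefix ht.1 hs.1 with hts | hst
        · exact hts
        · exact (hst.eq_of_length_le (hmax ht hst.length_le)) ▸ List.prefix_refl s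
      have hP := splitPrefixes_eq_insert hs hbelow
      rw [hP, ncard_insert_of_notMem (fun h => h.2.1 rfl) (finite_splitPrefixes T s)] at hcard
      obtain ⟨i, hi⟩ := hs.1.exists_concat_prefix_of_ne hs.2.1
      refine ⟨s, ih.2 ⟨hs.2.2, by omega⟩, i, (isMinSplit_iff hT).2 ⟨hu, hi, fun t ht hit => ?_⟩⟩
      simpa using (hit.trans (hbelow t ht)).length_le

end splitPrefixes

theorem IsPerfectTree.exists_isMinSplit {T : Set (List Bool)} (hT : IsPerfectTree T)
    {s : List Bool} (hs : s ∈ T) : ∃ t, IsMinSplit T s t := by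
  classical
  have hex : ∃ n, ∃ t, t.length = n ∧ s <+: t ∧ IsSplitNode T t :=
    let ⟨t, hst, ht⟩ := hT.2.2 s hs
    ⟨_, t, rfl, hst, ht⟩
  obtain ⟨t, hlen, hst, ht⟩ := Nat.find_spec hex
  refine ⟨t, (isMinSplit_iff hT.1).2 ⟨ht, hst, fun r hr hsr => ?_⟩⟩
  exact Nat.find_min hex (hlen ▸ hr.1.length_lt_of_ne hr.2.1) ⟨r, rfl, hsr, hr.2.2⟩

theorem IsPerfectTree.exists_splLevel_succ {T : Set (List Bool)} (hT : IsPerfectTree T)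
    {n : ℕ} {t : List Bool} (ht : t ∈ splLevel T n) (i : Bool) :
    ∃ u ∈ splLevel T (n + 1), t ++ [i] <+: u := by
  have hti : t ++ [i] ∈ T := by
    have := isSplitNode_of_mem_splLevel ht
    cases i
    exacts [this.2.1, this.2.2]
  obtain ⟨u, hu⟩ := hT.exists_isMinSplit hti
  exact ⟨u, ⟨t, ht, i, hu⟩, hu.2.1⟩

theorem splitPrefixes_eq_of_mem_splLevel {S T : Set (List Bool)} (hS : IsBinTree S)
    (hT : IsBinTree T) (hST : S ⊆ T) {n : ℕ} {u : List Bool} (huS : u ∈ splLevel S n)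
    (huT : u ∈ splLevel T n) : splitPrefixes S u = splitPrefixes T u :=
  eq_of_subset_of_ncard_le (splitPrefixes_mono hST)
    (((mem_splLevel_iff hT).1 huT).2.trans ((mem_splLevel_iff hS).1 huS).2.symm).le
    (finite_splitPrefixes T u)

theorem splLevel_eq_of_splLevel_succ_eq {S T : Set (List Bool)} (hS : IsPerfectTree S)
    (hT : IsPerfectTree T) (hST : S ⊆ T) {n : ℕ}
    (h : splLevel S (n + 1) = splLevel T (n + 1)) : splLevel S n = splLevel T n := by
  -- below a common node of level `n + 1`, `S` and `T` have the same splitting nodes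
  have hsame : ∀ t, IsSplitNode S t → IsSplitNode T t → (∃ u ∈ splLevel S (n + 1), t <+: u) →
      (t ∈ splLevel S n ↔ t ∈ splLevel T n) := by
    rintro t htS htT ⟨u, hu, htu⟩
    rw [mem_splLevel_iff hS.1, mem_splLevel_iff hT.1, splitPrefixes_eq_of_prefix hST htu
      (splitPrefixes_eq_of_mem_splLevel hS.1 hT.1 hST hu (h ▸ hu))]
    exact and_congr_left fun _ => iff_of_true htS htT
  ext t
  constructor
  · intro ht
    have htS := isSplitNode_of_mem_splLevel ht
    obtain ⟨u, hu, htu⟩ := hS.exists_splLevel_succ ht false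
    exact (hsame t htS (htS.mono hST) ⟨u, hu, (List.prefix_append _ _).trans htu⟩).1 ht
  · intro ht
    obtain ⟨u₀, hu₀, htu₀⟩ := hT.exists_splLevel_succ ht false
    obtain ⟨u₁, hu₁, htu₁⟩ := hT.exists_splLevel_succ ht true
    rw [← h] at hu₀ hu₁
    have htS : IsSplitNode S t := hS.1.isSplitNode_of_fork Bool.false_ne_true
      (hS.1 _ (isSplitNode_of_mem_splLevel hu₀).1 _ htu₀)
      (hS.1 _ (isSplitNode_of_mem_splLevel hu₁).1 _ htu₁)
    exact (hsame t htS (isSplitNode_of_mem_splLevel ht)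
      ⟨u₀, hu₀, (List.prefix_append _ _).trans htu₀⟩).2 ht

theorem SacksLeN.refl (T : Set (List Bool)) (n : ℕ) : SacksLeN T T n :=
  ⟨subset_rfl, rfl⟩

theorem SacksLeN.trans {R S T : Set (List Bool)} {n : ℕ} (hRS : SacksLeN R S n)
    (hST : SacksLeN S T n) : SacksLeN R T n :=
  ⟨hRS.1.trans hST.1, hRS.2.trans hST.2⟩

theorem SacksLeN.of_le {S T : Set (List Bool)} (hS : IsPerfectTree S) (hT : IsPerfectTree T)
    {m n : ℕ} (hnm : n ≤ m) (h : SacksLeN S T m) : SacksLeN S T n := by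
  induction m, hnm using Nat.le_induction with
  | base => exact h
  | succ m _ ih => exact ih ⟨h.1, splLevel_eq_of_splLevel_succ_eq hS hT h.1 h.2⟩

section fusion

variable {T : ℕ → Set (List Bool)}

theorem sacksLeN_of_fusion (hperf : ∀ m, IsPerfectTree (T m))
    (hfus : ∀ m, SacksLeN (T (m + 1)) (T m) m) {m n : ℕ} (hnm : n ≤ m) :
    SacksLeN (T m) (T n) n := by
  induction m, hnm using Nat.le_induction with
  | base => exact SacksLeN.refl _ _
  | succ m hnm ih => exact ((hfus m).of_le (hperf _) (hperf _) hnm).trans ih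

theorem isPerfectTree_iInter_and_sacksLeN (hperf : ∀ m, IsPerfectTree (T m))
    (hfus : ∀ m, SacksLeN (T (m + 1)) (T m) m) :
    IsPerfectTree (⋂ m, T m) ∧ ∀ n, SacksLeN (⋂ m, T m) (T n) n := by
  have hle : ∀ {n m}, n ≤ m → SacksLeN (T m) (T n) n := sacksLeN_of_fusion hperf hfus
  have htree : IsBinTree (⋂ m, T m) := fun s hs t hts =>
    mem_iInter.2 fun m => (hperf m).1 s (mem_iInter.1 hs m) t hts
  -- level `k` is frozen from stage `k` on, so its nodes split in every `T m`
  have hsplit_of_level : ∀ {k m t}, k ≤ m → t ∈ splLevel (T m) k →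
      IsSplitNode (⋂ m, T m) t := by
    intro k m t hkm ht
    rw [(hle hkm).2] at ht
    refine isSplitNode_iInter.2 fun m' => ?_
    rcases le_total k m' with hkm' | hm'k
    · exact isSplitNode_of_mem_splLevel (((hle hkm').2).symm ▸ ht)
    · exact (isSplitNode_of_mem_splLevel ht).mono (hle hm'k).1
  have hsplit : ∀ {m t}, t.length ≤ m → IsSplitNode (T m) t → IsSplitNode (⋂ m, T m) t :=
    fun hlen ht => hsplit_of_level (ncard_splitPrefixes_le_length.trans hlen)
      ((mem_splLevel_iff (hperf _).1).2 ⟨ht, rfl⟩)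
  have hprefixes : ∀ {m s}, s.length ≤ m →
      splitPrefixes (⋂ m, T m) s = splitPrefixes (T m) s := fun {m _} hlen =>
    Subset.antisymm (splitPrefixes_mono (iInter_subset T m)) fun r hr =>
      ⟨hr.1, hr.2.1, hsplit (hr.1.length_le.trans hlen) hr.2.2⟩
  have hlevel : ∀ n, splLevel (⋂ m, T m) n = splLevel (T n) n := by
    intro n
    ext s
    have hm : n ≤ max n s.length := le_max_left _ _
    have hs : s.length ≤ max n s.length := le_max_right _ _
    rw [← (hle hm).2, mem_splLevel_iff htree, mem_splLevel_iff (hperf _).1, hprefixes hs]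
    exact and_congr_left fun _ => ⟨(·.mono (iInter_subset T _)), hsplit hs⟩
  refine ⟨⟨htree, ⟨[], mem_iInter.2 fun m => (hperf m).nil_mem⟩, fun s hs => ?_⟩,
    fun n => ⟨iInter_subset T n, hlevel n⟩⟩
  obtain ⟨t, ht⟩ := (hperf s.length).exists_isMinSplit (mem_iInter.1 hs _)
  exact ⟨t, ht.2.1, hsplit_of_level ht.ncard_splitPrefixes_le
    ((mem_splLevel_iff (hperf _).1).2 ⟨ht.1, rfl⟩)⟩

end fusion

section product

variable {ι : Type*} {D : ℕ → Set ι} {p : ℕ → ι → Set (List Bool)}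

theorem CSLe.refl (D : Set ι) (f : ι → Set (List Bool)) : CSLe D f D f :=
  ⟨subset_rfl, fun _ _ => subset_rfl⟩

theorem CSLe.trans {D₁ D₂ D₃ : Set ι} {f₁ f₂ f₃ : ι → Set (List Bool)} (h₁₂ : CSLe D₁ f₁ D₂ f₂)
    (h₂₃ : CSLe D₂ f₂ D₃ f₃) : CSLe D₁ f₁ D₃ f₃ :=
  ⟨h₂₃.1.trans h₁₂.1, fun α hα => (h₁₂.2 α (h₂₃.1 hα)).trans (h₂₃.2 α hα)⟩

theorem csLe_of_le (hstep : ∀ n, CSLe (D (n + 1)) (p (n + 1)) (D n) (p n)) {m n : ℕ}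
    (hmn : m ≤ n) : CSLe (D n) (p n) (D m) (p m) := by
  induction n, hmn using Nat.le_induction with
  | base => exact CSLe.refl _ _
  | succ n _ ih => exact (hstep n).trans ih

theorem isPerfectTree_iInter_and_sacksLeN_of_mem {F : ℕ → Finset ι}
    (hcond : ∀ n, IsCSCond (D n) (p n)) (hFdom : ∀ n, ↑(F n) ⊆ D n)
    (hstep : ∀ n, CSLeFN (D (n + 1)) (p (n + 1)) (D n) (p n) (F n) n)
    (hFmono : ∀ n, F n ⊆ F (n + 1)) {k : ℕ} {α : ι} (hα : α ∈ F k) :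
    IsPerfectTree (⋂ m, ⋂ (_ : α ∈ D m), p m α) ∧
      SacksLeN (⋂ m, ⋂ (_ : α ∈ D m), p m α) (p k α) k := by
  have hF : ∀ {m}, k ≤ m → α ∈ F m := fun hkm => monotone_nat_of_le_succ hFmono hkm hα
  have hperf : ∀ m, IsPerfectTree (p (max m k) α) :=
    fun m => (hcond _).2 α (hFdom _ (hF (le_max_right m k)))
  have hfus : ∀ m, SacksLeN (p (max (m + 1) k) α) (p (max m k) α) m := by
    intro m
    rcases lt_or_ge m k with hmk | hkm
    · rw [max_eq_right hmk, max_eq_right hmk.le]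
      exact SacksLeN.refl _ _
    · rw [max_eq_left (hkm.trans m.le_succ), max_eq_left hkm]
      exact (hstep m).2 α (hF hkm)
  have hq : (⋂ m, ⋂ (_ : α ∈ D m), p m α) = ⋂ m, p (max m k) α := by
    ext x
    simp only [mem_iInter]
    exact ⟨fun hx m => hx _ (hFdom _ (hF (le_max_right m k))),
      fun hx m hm => (csLe_of_le (fun n => (hstep n).1) (le_max_left m k)).2 α hm (hx m)⟩
  obtain ⟨hperfq, hleq⟩ := isPerfectTree_iInter_and_sacksLeN hperf hfus
  rw [hq]
  exact ⟨hperfq, by simpa using hleq k⟩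

end product

/-- Fusion for the countable support product of Sacks forcing: given a fusion sequence
`(p n)` with finite sets `(F n)` as side conditions, the "intersection" condition, with domain
`⋃ n, dom (p n)` and value at `α` the intersection of all `p n (α)` with `α ∈ dom (p n)`,
is a condition of `S^λ` and satisfies `p ≤_{F n, n} p n` for all `n`. -/
theorem csProduct_fusion {ι : Type*} (D : ℕ → Set ι) (p : ℕ → ι → Set (List Bool))
    (F : ℕ → Finset ι)
    (hcond : ∀ n, IsCSCond (D n) (p n))
    (hFdom : ∀ n, ↑(F n) ⊆ D n)
    (hstep : ∀ n, CSLeFN (D (n + 1)) (p (n + 1)) (D n) (p n) (F n) n)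
    (hFmono : ∀ n, F n ⊆ F (n + 1))
    (hFcover : (⋃ n, (F n : Set ι)) = ⋃ n, D n) :
    IsCSCond (⋃ n, D n) (fun α => ⋂ m, ⋂ (_ : α ∈ D m), p m α) ∧
      ∀ n, CSLeFN (⋃ m, D m) (fun α => ⋂ m, ⋂ (_ : α ∈ D m), p m α) (D n) (p n) (F n) n := by
  have hfusion : ∀ {k α}, α ∈ F k → _ := fun hα =>
    isPerfectTree_iInter_and_sacksLeN_of_mem hcond hFdom hstep hFmono hα
  refine ⟨⟨countable_iUnion fun n => (hcond n).1, fun α hα => ?_⟩,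
    fun n => ⟨⟨subset_iUnion D n, fun α hα => iInter₂_subset n hα⟩, fun α hα => (hfusion hα).2⟩⟩
  rw [← hFcover, mem_iUnion] at hα
  obtain ⟨k, hk⟩ := hα
  exact (hfusion hk).1
end

section
/- Let A be a set, x ∉ A, and let ρ : A → Sym(ℕ) induce a cofinitary representation. Then every word w ∈ F_{A∪{x}} can be split as w = uv (concatenation of reduced words without cancellation) such that vu is equivalent with respect to ρ to a word in F_A or equivalent with respect to ρ to a nice word with respect to ρ. -/
/-- The distinguished generator `x` of the free group `F_{A ∪ {x}}`, which we realize as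
the free group on `A ⊕ Unit` with `x := Sum.inr ()`. -/
def xgen (A : Type*) : FreeGroup (A ⊕ Unit) := FreeGroup.of (Sum.inr ())

/-- The embedding of `F_A` as a subgroup of `F_{A ∪ {x}}`. -/
def embA (A : Type*) : FreeGroup A →* FreeGroup (A ⊕ Unit) :=
  FreeGroup.map Sum.inl

/-- `ρ : A → Sym(ℕ)` induces a cofinitary representation: every element of the range of
the induced homomorphism `ρ̂ : F_A → Sym(ℕ)` is the identity or has finitely many fixed
points. -/
def IsCofinitaryRep {A : Type*} (ρ : A → Equiv.Perm ℕ) : Prop :=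
  ∀ w : FreeGroup A,
    FreeGroup.lift ρ w = 1 ∨ (Function.fixedPoints ⇑(FreeGroup.lift ρ w)).Finite

/-- `w ∈ F_{A ∪ {x}}` is a nice word with respect to `ρ`: either `w = x^n` or `w = x^{-n}`
for some `n > 0`, or the reduced word of `w` is, without cancellation, of the form
`u_l x^{k_l} ⋯ u_1 x^{k_1} u_0 x^{k_0}` with each `u_i ∈ W⁰_{ρ,x} = F_A \ ker ρ̂` and each
`k_i ∈ ℤ \ {0}`. -/
def NiceWord {A : Type*} [DecidableEq A] (ρ : A → Equiv.Perm ℕ)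
    (w : FreeGroup (A ⊕ Unit)) : Prop :=
  (∃ n : ℤ, n ≠ 0 ∧ w = xgen A ^ n) ∨
  (∃ l : ℕ, ∃ u : Fin (l + 1) → FreeGroup A, ∃ k : Fin (l + 1) → ℤ,
    (∀ i, FreeGroup.lift ρ (u i) ≠ 1) ∧ (∀ i, k i ≠ 0) ∧
    w.toWord = (List.ofFn fun i : Fin (l + 1) =>
      (embA A (u i)).toWord ++ (xgen A ^ k i).toWord).flatten)

/-- `w` and `v` are equivalent with respect to `ρ`: they have the same image in the
quotient of `F_{A ∪ {x}}` by the normal closure of `ker ρ̂ ⊆ F_A`. -/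
def WEquiv {A : Type*} (ρ : A → Equiv.Perm ℕ) (w v : FreeGroup (A ⊕ Unit)) : Prop :=
  w⁻¹ * v ∈ Subgroup.normalClosure (⇑(embA A) '' {u : FreeGroup A | FreeGroup.lift ρ u = 1})

/-!
Splitting `w = u v` without cancellation and passing to `v u` is rotating the reduced word
of `w`. Modulo the normal closure of `ker ρ̂` we may delete a subword `B` spelling an element
of `ker ρ̂`, and this is compatible with rotations: cutting `M ++ B` at a point of `M` gives
`M.drop j ++ B ++ M.take j`, equivalent to the rotation `M.drop j ++ M.take j` of `M`. So a good
rotation of the shorter word `M` yields one of `M ++ B`.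

This drives a strong induction on the length of a reduced word. Cyclic cancellation is such a
deletion (of `c⁻¹ c`). A cyclically reduced word made of letters of `A` only, or of `x^{±1}`
only, is already of the required form. Otherwise rotate it to begin with a letter of `A` and
end with a letter `x^{±1}`; it is then a product of blocks `u_i x^{k_i}` with nonempty `u_i`.
If no `u_i` lies in `ker ρ̂` the word is nice. If one does, delete it: since the word begins
and ends with letters of different kinds, what remains is again reduced after rotation.
-/

open FreeGroup

section Lists

variable {α : Type*}

theorem List.rotate_append_of_le_length {M : List α} (B : List α) {j : ℕ}
    (hj : j ≤ M.length) :
    (M ++ B).rotate j = M.drop j ++ B ++ M.take j := by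
  rw [List.rotate_eq_drop_append_take (by simp; omega), List.drop_append_of_le_length hj,
    List.take_append_of_le_length hj]

theorem List.takeWhile_ne_nil_of_head {p : α → Bool} {L : List α} (hL : L ≠ [])
    (h : p (L.head hL)) : L.takeWhile p ≠ [] := by
  obtain ⟨b, L, rfl⟩ := List.exists_cons_of_ne_nil hL
  simp [show p b from h]

theorem List.eq_false_of_mem_head?_dropWhile {p : α → Bool} {L : List α} {q : α}
    (hq : q ∈ (L.dropWhile p).head?) : p q = false := by
  have := List.head?_dropWhile_not p L
  rwa [Option.mem_def.mp hq] at this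

theorem FreeGroup.IsReduced.exists_eq_replicate {L : List (α × Bool)} {s : α}
    (hL : IsReduced L) (hs : ∀ q ∈ L, q.1 = s) : ∃ b, L = List.replicate L.length (s, b) := by
  have hchain : L.IsChain (· = ·) := hL.imp_of_mem_imp fun a b ha hb hab =>
    Prod.ext (by rw [hs a ha, hs b hb]) (hab (by rw [hs a ha, hs b hb]))
  rcases L with _ | ⟨q, L⟩
  · exact ⟨true, rfl⟩
  · refine ⟨q.2, ?_⟩
    rw [show (s, q.2) = q from Prod.ext (hs q (List.mem_cons_self ..)).symm rfl]
    exact List.isChain_eq_iff_eq_replicate.mp hchain q rfl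

theorem FreeGroup.IsCyclicallyReduced.isReduced_append_self {L : List (α × Bool)}
    (h : IsCyclicallyReduced L) : IsReduced (L ++ L) := by
  simpa using (h.flatten_replicate 2).isReduced

theorem FreeGroup.IsCyclicallyReduced.isReduced_rotate {L : List (α × Bool)}
    (h : IsCyclicallyReduced L) (i : ℕ) : IsReduced (L.rotate i) := by
  rcases eq_or_ne L [] with rfl | hL
  · exact IsReduced.nil
  have hi := (Nat.mod_lt i (List.length_pos_iff.mpr hL)).le
  rw [← List.rotate_mod, List.rotate_eq_drop_append_take hi]
  refine h.isReduced_append_self.infix ⟨L.take (i % L.length), L.drop (i % L.length), ?_⟩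
  rw [List.append_assoc, List.append_assoc, List.take_append_drop, ← List.append_assoc,
    List.take_append_drop]

end Lists

section Letters

variable {A : Type*}

def inlLetter (q : A × Bool) : (A ⊕ Unit) × Bool := (Sum.inl q.1, q.2)

theorem isReduced_map_inlLetter {M : List (A × Bool)} :
    IsReduced (M.map inlLetter) ↔ IsReduced M := by
  simp [FreeGroup.IsReduced, List.isChain_map, inlLetter]

theorem exists_map_inlLetter_eq {L : List ((A ⊕ Unit) × Bool)} (hL : ∀ q ∈ L, q.1.isLeft) :
    ∃ M : List (A × Bool), M.map inlLetter = L := by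
  induction L with
  | nil => exact ⟨[], rfl⟩
  | cons q L ih =>
    obtain ⟨a, ha⟩ := Sum.isLeft_iff.mp (hL q (List.mem_cons_self ..))
    obtain ⟨M, rfl⟩ := ih fun r hr => hL r (List.mem_cons_of_mem _ hr)
    exact ⟨(a, q.2) :: M, by simp [inlLetter, ← ha]⟩

def StartsInAEndsInX (K : List ((A ⊕ Unit) × Bool)) : Prop :=
  (∀ q ∈ K.head?, q.1.isLeft) ∧ ∀ q ∈ K.getLast?, q.1.isRight

theorem StartsInAEndsInX.isCyclicallyReduced {K : List ((A ⊕ Unit) × Bool)}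
    (hK : StartsInAEndsInX K) (hred : IsReduced K) : IsCyclicallyReduced K :=
  ⟨hred, fun a ha b hb hab => absurd ⟨hab ▸ hK.1 b hb, hK.2 a ha⟩ not_isLeft_and_isRight⟩

theorem exists_rotate_startsInAEndsInX_of_head {L : List ((A ⊕ Unit) × Bool)}
    (hhead : ∀ q ∈ L.head?, q.1.isRight) (hA : ∃ q ∈ L, q.1.isLeft) :
    ∃ i, StartsInAEndsInX (L.rotate i) := by
  obtain ⟨a, ha, haA⟩ := hA
  have hL := List.ne_nil_of_mem ha
  have hD : L.dropWhile (·.1.isRight) ≠ [] := by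
    rw [Ne, List.dropWhile_eq_nil_iff]
    exact fun hall => not_isLeft_and_isRight ⟨haA, hall a ha⟩
  have hP : L.takeWhile (·.1.isRight) ≠ [] :=
    List.takeWhile_ne_nil_of_head hL (hhead _ (List.head?_eq_some_head hL))
  have hrot :=
    List.rotate_append_length_eq (L.takeWhile (·.1.isRight)) (L.dropWhile (·.1.isRight))
  rw [List.takeWhile_append_dropWhile] at hrot
  refine ⟨(L.takeWhile (·.1.isRight)).length, ?_⟩
  rw [hrot]
  refine ⟨fun q hq => ?_, fun q hq => ?_⟩
  · rw [List.head?_append_of_ne_nil _ hD, List.head?_eq_some_head hD, Option.mem_some_iff] at hq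
    exact Sum.isRight_eq_false.mp (hq ▸ List.head_dropWhile_not _ hD)
  · rw [List.getLast?_append_of_ne_nil _ hP] at hq
    exact (List.mem_takeWhile_imp (List.mem_of_mem_getLast? hq) :)

theorem exists_rotate_startsInAEndsInX {L : List ((A ⊕ Unit) × Bool)}
    (hA : ∃ q ∈ L, q.1.isLeft) (hX : ∃ q ∈ L, q.1.isRight) :
    ∃ i, StartsInAEndsInX (L.rotate i) := by
  obtain ⟨q, hq, hqX⟩ := hX
  obtain ⟨k, hk, rfl⟩ := List.getElem_of_mem hq
  obtain ⟨i, hi⟩ := exists_rotate_startsInAEndsInX_of_head (L := L.rotate k)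
    (fun q hq => by
      rw [List.head?_rotate hk, List.getElem?_eq_getElem hk, Option.mem_some_iff] at hq
      exact hq ▸ hqX)
    (by simpa only [List.mem_rotate] using hA)
  exact ⟨k + i, by rwa [← List.rotate_rotate]⟩

theorem StartsInAEndsInX.exists_runs {K : List ((A ⊕ Unit) × Bool)} (hK : StartsInAEndsInX K)
    (hne : K ≠ []) :
    ∃ U X K₂, K = U ++ X ++ K₂ ∧ U ≠ [] ∧ X ≠ [] ∧ (∀ q ∈ U, q.1.isLeft) ∧
      (∀ q ∈ X, q.1.isRight) ∧ StartsInAEndsInX K₂ := by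
  set R := K.dropWhile (·.1.isLeft)
  have hR : R ≠ [] := by
    rw [Ne, List.dropWhile_eq_nil_iff]
    exact fun hall => not_isLeft_and_isRight
      ⟨hall _ (K.getLast_mem hne), hK.2 _ (List.getLast?_eq_some_getLast hne)⟩
  have hsplit : K = K.takeWhile (·.1.isLeft) ++ R.takeWhile (·.1.isRight) ++
      R.dropWhile (·.1.isRight) := by
    rw [List.append_assoc, List.takeWhile_append_dropWhile, List.takeWhile_append_dropWhile]
  refine ⟨_, _, _, hsplit,
    List.takeWhile_ne_nil_of_head hne (hK.1 _ (List.head?_eq_some_head hne)),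
    List.takeWhile_ne_nil_of_head hR ?_, fun q hq => (List.mem_takeWhile_imp hq :),
    fun q hq => (List.mem_takeWhile_imp hq :), fun q hq => ?_, fun q hq => ?_⟩
  · exact Sum.isLeft_eq_false.mp (List.head_dropWhile_not _ hR)
  · exact Sum.isRight_eq_false.mp (List.eq_false_of_mem_head?_dropWhile hq :)
  · refine hK.2 q ?_
    rw [hsplit, List.getLast?_append, Option.mem_def.mp hq]
    rfl

variable (ρ : A → Equiv.Perm ℕ)

abbrev kerClosure : Subgroup (FreeGroup (A ⊕ Unit)) :=
  Subgroup.normalClosure (embA A '' {u : FreeGroup A | FreeGroup.lift ρ u = 1})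

def IsKerWord (B : List ((A ⊕ Unit) × Bool)) : Prop :=
  ∃ c : FreeGroup A, mk B = embA A c ∧ FreeGroup.lift ρ c = 1

variable {ρ}

theorem wEquiv_iff {g h : FreeGroup (A ⊕ Unit)} :
    WEquiv ρ g h ↔ (g : FreeGroup (A ⊕ Unit) ⧸ kerClosure ρ) = h :=
  QuotientGroup.eq.symm

theorem WEquiv.trans {g h k : FreeGroup (A ⊕ Unit)} (hgh : WEquiv ρ g h)
    (hhk : WEquiv ρ h k) : WEquiv ρ g k :=
  wEquiv_iff.mpr ((wEquiv_iff.mp hgh).trans (wEquiv_iff.mp hhk))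

theorem wEquiv_mul_embA_mul {c : FreeGroup A} (hc : FreeGroup.lift ρ c = 1)
    (g h : FreeGroup (A ⊕ Unit)) : WEquiv ρ (g * embA A c * h) (g * h) := by
  have hc' : ((embA A c : FreeGroup (A ⊕ Unit)) : _ ⧸ kerClosure ρ) = 1 :=
    (QuotientGroup.eq_one_iff _).mpr (Subgroup.subset_normalClosure ⟨c, hc, rfl⟩)
  rw [wEquiv_iff, QuotientGroup.mk_mul, QuotientGroup.mk_mul, hc', mul_one,
    QuotientGroup.mk_mul]

end Letters

section NiceForms

variable {A : Type*} [DecidableEq A]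

theorem toWord_embA (u : FreeGroup A) : (embA A u).toWord = u.toWord.map inlLetter := by
  conv_lhs => rw [← mk_toWord (x := u), embA, map.mk, toWord_mk]
  exact (isReduced_map_inlLetter.mpr isReduced_toWord).reduce_eq

theorem exists_toWord_embA_eq {U : List ((A ⊕ Unit) × Bool)} (hU : IsReduced U)
    (hleft : ∀ q ∈ U, q.1.isLeft) : ∃ u : FreeGroup A, (embA A u).toWord = U := by
  obtain ⟨M, rfl⟩ := exists_map_inlLetter_eq hleft
  refine ⟨mk M, ?_⟩
  rw [toWord_embA, toWord_mk, (isReduced_map_inlLetter.mp hU).reduce_eq]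

theorem toWord_xgen_zpow_natCast (n : ℕ) :
    (xgen A ^ (n : ℤ)).toWord = List.replicate n (Sum.inr (), true) := by
  rw [zpow_natCast, xgen, toWord_of_pow]

theorem toWord_xgen_zpow_neg_natCast (n : ℕ) :
    (xgen A ^ (-n : ℤ)).toWord = List.replicate n (Sum.inr (), false) := by
  rw [zpow_neg, toWord_inv, toWord_xgen_zpow_natCast]
  simp [invRev, List.map_replicate]

theorem exists_toWord_xgen_zpow_eq {X : List ((A ⊕ Unit) × Bool)} (hX : IsReduced X)
    (hne : X ≠ []) (hright : ∀ q ∈ X, q.1.isRight) :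
    ∃ k : ℤ, k ≠ 0 ∧ (xgen A ^ k).toWord = X := by
  obtain ⟨b, hb⟩ := hX.exists_eq_replicate (s := Sum.inr ()) fun q hq => by
    obtain ⟨⟨⟩, h⟩ := Sum.isRight_iff.mp (hright q hq); exact h
  have hlen : X.length ≠ 0 := by simpa using hne
  cases b
  · exact ⟨-X.length, by simpa using hlen, by rw [toWord_xgen_zpow_neg_natCast, ← hb]⟩
  · exact ⟨X.length, by simpa using hlen, by rw [toWord_xgen_zpow_natCast, ← hb]⟩

variable (ρ : A → Equiv.Perm ℕ)

def HasNiceForm (g : FreeGroup (A ⊕ Unit)) : Prop :=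
  (∃ w' : FreeGroup A, WEquiv ρ g (embA A w')) ∨
    (∃ w' : FreeGroup (A ⊕ Unit), NiceWord ρ w' ∧ WEquiv ρ g w')

def HasNiceRotation (L : List ((A ⊕ Unit) × Bool)) : Prop :=
  ∃ j, HasNiceForm ρ (mk (L.rotate j))

inductive NiceBlocks : List ((A ⊕ Unit) × Bool) → Prop
  | nil : NiceBlocks []
  | cons {u : FreeGroup A} {k : ℤ} {L : List ((A ⊕ Unit) × Bool)}
      (hu : FreeGroup.lift ρ u ≠ 1) (hk : k ≠ 0) (hL : NiceBlocks L) :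
      NiceBlocks ((embA A u).toWord ++ (xgen A ^ k).toWord ++ L)

theorem hasNiceForm_embA (u : FreeGroup A) : HasNiceForm ρ (embA A u) :=
  Or.inl ⟨u, wEquiv_iff.mpr rfl⟩

variable {ρ}

theorem NiceWord.hasNiceForm {g : FreeGroup (A ⊕ Unit)} (hg : NiceWord ρ g) :
    HasNiceForm ρ g :=
  Or.inr ⟨g, hg, wEquiv_iff.mpr rfl⟩

theorem HasNiceForm.of_wEquiv {g h : FreeGroup (A ⊕ Unit)} (hgh : WEquiv ρ g h)
    (hh : HasNiceForm ρ h) : HasNiceForm ρ g := by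
  rcases hh with ⟨w', hw'⟩ | ⟨w', hnice, hw'⟩
  · exact Or.inl ⟨w', hgh.trans hw'⟩
  · exact Or.inr ⟨w', hnice, hgh.trans hw'⟩

theorem HasNiceRotation.of_rotate {L : List ((A ⊕ Unit) × Bool)} {i : ℕ}
    (h : HasNiceRotation ρ (L.rotate i)) : HasNiceRotation ρ L := by
  obtain ⟨j, hj⟩ := h
  exact ⟨i + j, by rwa [← List.rotate_rotate]⟩

theorem HasNiceRotation.exists_le {L : List ((A ⊕ Unit) × Bool)} (h : HasNiceRotation ρ L) :
    ∃ j ≤ L.length, HasNiceForm ρ (mk (L.rotate j)) := by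
  obtain ⟨j, hj⟩ := h
  rcases eq_or_ne L [] with rfl | hL
  · exact ⟨0, le_rfl, by simpa using hj⟩
  · exact ⟨j % L.length, (Nat.mod_lt _ (List.length_pos_iff.mpr hL)).le,
      by rwa [List.rotate_mod]⟩

theorem HasNiceRotation.append_isKerWord {M B : List ((A ⊕ Unit) × Bool)}
    (h : HasNiceRotation ρ M) (hB : IsKerWord ρ B) : HasNiceRotation ρ (M ++ B) := by
  obtain ⟨c, hB, hc⟩ := hB
  obtain ⟨j, hj, hgood⟩ := h.exists_le
  refine ⟨j, HasNiceForm.of_wEquiv ?_ hgood⟩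
  rw [List.rotate_append_of_le_length B hj, List.rotate_eq_drop_append_take hj, ← mul_mk,
    ← mul_mk, ← mul_mk, hB]
  exact wEquiv_mul_embA_mul hc _ _

theorem HasNiceRotation.of_reduceCyclically {L : List ((A ⊕ Unit) × Bool)}
    (h : HasNiceRotation ρ (reduceCyclically L)) : HasNiceRotation ρ L := by
  set C := reduceCyclically.conjugator L
  have hL : L = C ++ (reduceCyclically L ++ invRev C) := by
    rw [← List.append_assoc, reduceCyclically.conj_conjugator_reduceCyclically]
  have hcancel : IsKerWord ρ (invRev C ++ C) :=
    ⟨1, by rw [← mul_mk, ← inv_mk, inv_mul_cancel, MonoidHom.map_one], map_one _⟩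
  refine HasNiceRotation.of_rotate (i := C.length) ?_
  rw [hL, List.rotate_append_length_eq, List.append_assoc]
  exact h.append_isKerWord hcancel

theorem NiceBlocks.exists_ofFn {K : List ((A ⊕ Unit) × Bool)} (h : NiceBlocks ρ K)
    (hne : K ≠ []) :
    ∃ l : ℕ, ∃ u : Fin (l + 1) → FreeGroup A, ∃ k : Fin (l + 1) → ℤ,
      (∀ i, FreeGroup.lift ρ (u i) ≠ 1) ∧ (∀ i, k i ≠ 0) ∧
      K = (List.ofFn fun i : Fin (l + 1) =>
        (embA A (u i)).toWord ++ (xgen A ^ k i).toWord).flatten := by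
  induction h with
  | nil => exact absurd rfl hne
  | @cons u k L hu hk hL ih =>
    rcases eq_or_ne L [] with rfl | hL'
    · exact ⟨0, fun _ => u, fun _ => k, fun _ => hu, fun _ => hk, by simp⟩
    · obtain ⟨l, u', k', hu', hk', rfl⟩ := ih hL'
      refine ⟨l + 1, Fin.cons u u', Fin.cons k k', Fin.cases hu hu', Fin.cases hk hk', ?_⟩
      simp [List.ofFn_succ]

theorem NiceBlocks.niceWord_mk {K : List ((A ⊕ Unit) × Bool)} (h : NiceBlocks ρ K)
    (hK : IsReduced K) (hne : K ≠ []) : NiceWord ρ (mk K) := by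
  rw [NiceWord, toWord_mk, hK.reduce_eq]
  exact Or.inr (h.exists_ofFn hne)

theorem niceBlocks_or_exists_isKerWord {K : List ((A ⊕ Unit) × Bool)} (hK : IsReduced K)
    (hK' : StartsInAEndsInX K) :
    NiceBlocks ρ K ∨ ∃ Pre U Post, K = Pre ++ U ++ Post ∧ U ≠ [] ∧ IsKerWord ρ U := by
  induction hn : K.length using Nat.strong_induction_on generalizing K with
  | _ n ih =>
  rcases eq_or_ne K [] with rfl | hne
  · exact Or.inl .nil
  obtain ⟨U, X, K₂, rfl, hU, hX, hUA, hXx, hK₂⟩ := hK'.exists_runs hne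
  obtain ⟨u, hu⟩ := exists_toWord_embA_eq (hK.infix ⟨[], X ++ K₂, by simp⟩) hUA
  by_cases hker : FreeGroup.lift ρ u = 1
  · exact Or.inr ⟨[], U, X ++ K₂, by simp, hU, u, by rw [← hu, mk_toWord], hker⟩
  obtain ⟨k, hk, hxk⟩ := exists_toWord_xgen_zpow_eq (hK.infix ⟨U, K₂, rfl⟩) hX hXx
  have hlt : K₂.length < n := by
    have := List.length_pos_iff.mpr hU
    simp only [← hn, List.length_append]
    omega
  rcases ih _ hlt (hK.infix ⟨U ++ X, [], by simp⟩) hK₂ rfl with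
    hnice | ⟨Pre, V, Post, rfl, hV⟩
  · exact Or.inl (hu ▸ hxk ▸ .cons hker hk hnice)
  · exact Or.inr ⟨U ++ X ++ Pre, V, Post, by simp, hV⟩

theorem hasNiceRotation_of_startsInAEndsInX {K : List ((A ⊕ Unit) × Bool)} (hK : IsReduced K)
    (hK' : StartsInAEndsInX K) (hne : K ≠ [])
    (ih : ∀ M, IsReduced M → M.length < K.length → HasNiceRotation ρ M) :
    HasNiceRotation ρ K := by
  rcases niceBlocks_or_exists_isKerWord hK hK' with hnice | ⟨Pre, U, Post, rfl, hU, hker⟩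
  · exact ⟨0, by rw [List.rotate_zero]; exact (hnice.niceWord_mk hK hne).hasNiceForm⟩
  have hM : IsReduced (Post ++ Pre) :=
    (hK'.isCyclicallyReduced hK).isReduced_append_self.infix ⟨Pre ++ U, U ++ Post, by simp⟩
  have hlt : (Post ++ Pre).length < (Pre ++ U ++ Post).length := by
    have := List.length_pos_iff.mpr hU
    simp only [List.length_append]
    omega
  refine HasNiceRotation.of_rotate (i := (Pre ++ U).length) ?_
  rw [List.rotate_append_length_eq, ← List.append_assoc]
  exact (ih _ hM hlt).append_isKerWord hker

theorem hasNiceRotation_of_isCyclicallyReduced {R : List ((A ⊕ Unit) × Bool)}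
    (hR : IsCyclicallyReduced R)
    (ih : ∀ M, IsReduced M → M.length < R.length → HasNiceRotation ρ M) :
    HasNiceRotation ρ R := by
  by_cases hA : ∀ q ∈ R, q.1.isLeft
  · obtain ⟨u, hu⟩ := exists_toWord_embA_eq hR.isReduced hA
    exact ⟨0, by rw [List.rotate_zero, ← hu, mk_toWord]; exact hasNiceForm_embA ρ u⟩
  have hne : R ≠ [] := by
    rintro rfl
    exact hA fun _ h => absurd h List.not_mem_nil
  by_cases hX : ∀ q ∈ R, q.1.isRight
  · obtain ⟨k, hk, hxk⟩ := exists_toWord_xgen_zpow_eq hR.isReduced hne hX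
    have hnice : NiceWord ρ (xgen A ^ k) := Or.inl ⟨k, hk, rfl⟩
    exact ⟨0, by rw [List.rotate_zero, ← hxk, mk_toWord]; exact hnice.hasNiceForm⟩
  push Not at hA hX
  obtain ⟨i, hi⟩ := exists_rotate_startsInAEndsInX
    (hX.imp fun q hq => ⟨hq.1, by simpa using hq.2⟩)
    (hA.imp fun q hq => ⟨hq.1, by simpa using hq.2⟩)
  refine HasNiceRotation.of_rotate (hasNiceRotation_of_startsInAEndsInX
    (hR.isReduced_rotate i) hi ?_ fun M hM hlt => ih M hM (by simpa using hlt))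
  rwa [Ne, List.rotate_eq_nil_iff]

theorem hasNiceRotation_of_isReduced {L : List ((A ⊕ Unit) × Bool)} (hL : IsReduced L) :
    HasNiceRotation ρ L := by
  induction hn : L.length using Nat.strong_induction_on generalizing L with
  | _ n ih =>
  have hlen : (reduceCyclically L).length ≤ L.length := by
    conv_rhs => rw [← reduceCyclically.conj_conjugator_reduceCyclically L]
    simp only [List.length_append]
    omega
  exact HasNiceRotation.of_reduceCyclically (hasNiceRotation_of_isCyclicallyReduced
    (reduceCyclically.isCyclicallyReduced hL) fun M hM hlt => ih _ (by omega) hM rfl)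

theorem exists_split_of_hasNiceRotation {w : FreeGroup (A ⊕ Unit)}
    (h : HasNiceRotation ρ w.toWord) :
    ∃ u v : FreeGroup (A ⊕ Unit),
      w.toWord = u.toWord ++ v.toWord ∧ HasNiceForm ρ (v * u) := by
  obtain ⟨j, hj, hgood⟩ := h.exists_le
  refine ⟨mk (w.toWord.take j), mk (w.toWord.drop j), ?_, ?_⟩
  · rw [toWord_mk, toWord_mk, (isReduced_toWord.infix (List.take_prefix ..).isInfix).reduce_eq,
      (isReduced_toWord.infix (List.drop_suffix ..).isInfix).reduce_eq, List.take_append_drop]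
  · rwa [mul_mk, ← List.rotate_eq_drop_append_take hj]

end NiceForms

theorem split_into_nice_word_general {A : Type*} [DecidableEq A] (ρ : A → Equiv.Perm ℕ)
    (w : FreeGroup (A ⊕ Unit)) :
    ∃ u v : FreeGroup (A ⊕ Unit), w.toWord = u.toWord ++ v.toWord ∧
      ((∃ w' : FreeGroup A, WEquiv ρ (v * u) (embA A w')) ∨
       (∃ w' : FreeGroup (A ⊕ Unit), NiceWord ρ w' ∧ WEquiv ρ (v * u) w')) :=
  exists_split_of_hasNiceRotation (hasNiceRotation_of_isReduced isReduced_toWord)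

/-- Every word `w ∈ F_{A ∪ {x}}` can be split as `w = uv` (concatenation of the reduced
words without cancellation) such that `vu` is equivalent with respect to `ρ` to a word in
`F_A`, or equivalent with respect to `ρ` to a nice word with respect to `ρ`. -/
theorem split_into_nice_word {A : Type*} [DecidableEq A] (ρ : A → Equiv.Perm ℕ)
    (hρ : IsCofinitaryRep ρ) (w : FreeGroup (A ⊕ Unit)) :
    ∃ u v : FreeGroup (A ⊕ Unit), w.toWord = u.toWord ++ v.toWord ∧
      ((∃ w' : FreeGroup A, WEquiv ρ (v * u) (embA A w')) ∨
       (∃ w' : FreeGroup (A ⊕ Unit), NiceWord ρ w' ∧ WEquiv ρ (v * u) w')) :=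
  split_into_nice_word_general ρ w
end

section
/- Let A be a set, x ∉ A, let ρ : A → Sym(ℕ) induce a cofinitary representation, let s be a finite partial injection on ℕ and let W_0 be a finite set of nice words with respect to ρ. Then: (1) if n ∈ ω \ dom(s), then for all but finitely many m ∈ ω the extension t := s ∪ {(n,m)} is a finite partial injection and fix(ρ[s](w)) = fix(ρ[t](w)) for every w ∈ W_0; (2) if m ∈ ω \ ran(s), then for all but finitely many n ∈ ω the extension t := s ∪ {(n,m)} is a finite partial injection and fix(ρ[s](w)) = fix(ρ[t](w)) for every w ∈ W_0. -/
/-- Evaluation of a single letter of a word over `A ∪ {x}` as a partial injection of `ℕ`: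
a letter `a` (resp. `a⁻¹`) with `a ∈ A` evaluates to `ρ(a)` (resp. `ρ(a)⁻¹`), and the
letter `x` (resp. `x⁻¹`) evaluates to the finite partial injection `s` (resp. `s⁻¹`). -/
def evalLetter {A : Type*} (ρ : A → Equiv.Perm ℕ) (s : ℕ ≃. ℕ) :
    (A ⊕ Unit) × Bool → (ℕ ≃. ℕ)
  | (Sum.inl a, true) => (ρ a).toPEquiv
  | (Sum.inl a, false) => (ρ a).symm.toPEquiv
  | (Sum.inr _, true) => s
  | (Sum.inr _, false) => s.symm

/-- `ρ[s](w)`: evaluation of the reduced word of `w ∈ F_{A ∪ {x}}` as a partial injection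
of `ℕ`, substituting `ρ(a)` for `a ∈ A` and `s` for `x` and composing (the rightmost
letter is applied first). -/
def wordEval {A : Type*} [DecidableEq A] (ρ : A → Equiv.Perm ℕ) (s : ℕ ≃. ℕ)
    (w : FreeGroup (A ⊕ Unit)) : ℕ ≃. ℕ :=
  w.toWord.foldr (fun l acc => acc.trans (evalLetter ρ s l)) (PEquiv.refl ℕ)

/-- The set of fixed points of a partial map. -/
def pFix (h : ℕ ≃. ℕ) : Set ℕ := {n | h n = some n}

/-!
Since `s ⊆ t = s ∪ {(n, m)}`, every fixed point of `ρ[s](w)` is one of `ρ[t](w)`. Conversely,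
nothing leaves `m` under `t`, so a computation of `t ^ k` that neither starts nor ends at `m` is
a computation of `s ^ k`. A nice word evaluates to `g_l t^{k_l} ⋯ g_0 t^{k_0}` with each
`g_i = ρ̂(u_i)` cofinitary, so for all but finitely many `m` every `g_i` and `g_i⁻¹` move `m` off
the finite support of `t`. Along a closed computation every intermediate point lies in that
support, hence a power of `t` can neither end at `m` (the next `g_i` would leave the support) nor
start there (the previous `g_i` would have come from outside it): the computation is one of `s`.
The second part is the first one applied to `s⁻¹ ⊆ t⁻¹`, in which `n` is the sink, since
`ρ[s](w)` is the same kind of block product in `s⁻¹` with negated exponents.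
-/

namespace PEquiv

variable {α : Type*}

instance : Monoid (α ≃. α) where
  mul f g := g.trans f
  one := PEquiv.refl α
  mul_assoc f g h := (trans_assoc h g f).symm
  one_mul := trans_refl
  mul_one := refl_trans

theorem mul_def (f g : α ≃. α) : f * g = g.trans f := rfl

theorem one_apply (a : α) : (1 : α ≃. α) a = some a := rfl

theorem mul_apply_eq_some {f g : α ≃. α} {a c : α} :
    (f * g) a = some c ↔ ∃ b, g a = some b ∧ f b = some c :=
  trans_eq_some g f a c

theorem symm_mul (f g : α ≃. α) : (f * g).symm = g.symm * f.symm :=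
  symm_trans_rev g f

theorem symm_pow (f : α ≃. α) (n : ℕ) : (f ^ n).symm = f.symm ^ n := by
  induction n with
  | zero => exact symm_refl
  | succ n ih => rw [pow_succ, symm_mul, ih, pow_succ']

def _root_.Equiv.Perm.toPEquivHom : Equiv.Perm α →* α ≃. α where
  toFun := Equiv.toPEquiv
  map_one' := Equiv.toPEquiv_refl
  map_mul' g h := Equiv.toPEquiv_trans h g

theorem symm_le_symm {f g : α ≃. α} (h : f ≤ g) : f.symm ≤ g.symm := by
  simp only [le_def, Option.mem_def, eq_some_iff] at h ⊢
  exact fun a b hb => h b a hb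

instance : MulLeftMono (α ≃. α) where
  elim f g g' h := by
    simp only [le_def, Option.mem_def, mul_apply_eq_some] at h ⊢
    rintro a c ⟨b, hb, hc⟩
    exact ⟨b, h a b hb, hc⟩

instance : MulRightMono (α ≃. α) where
  elim f g g' h := by
    simp only [le_def, Option.mem_def, Function.swap, mul_apply_eq_some] at h ⊢
    rintro a c ⟨b, hb, hc⟩
    exact ⟨b, hb, h b c hc⟩

theorem pow_succ_apply_eq_none {f : α ≃. α} {a : α} (h : f a = none) (n : ℕ) :
    (f ^ (n + 1)) a = none := by
  rw [pow_succ, mul_def, trans_eq_none]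
  simp [h]

def supp (f : α ≃. α) : Set α := {a | (f a).isSome ∨ (f.symm a).isSome}

theorem supp_symm (f : α ≃. α) : f.symm.supp = f.supp :=
  Set.ext fun _ => or_comm

theorem notMem_supp {f : α ≃. α} {a : α} : a ∉ f.supp ↔ f a = none ∧ f.symm a = none := by
  simp [supp]

theorem mem_supp_of_pow_eq_some {f : α ≃. α} {n : ℕ} {a b : α} (h : (f ^ (n + 1)) a = some b) :
    a ∈ f.supp ∧ b ∈ f.supp := by
  refine ⟨Or.inl ?_, Or.inr ?_⟩
  · obtain ⟨c, hc, -⟩ := mul_apply_eq_some.1 (pow_succ f n ▸ h)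
    simp [hc]
  · obtain ⟨c, -, hc⟩ := mul_apply_eq_some.1 (pow_succ' f n ▸ h)
    simp [(eq_some_iff f).2 hc]

theorem supp_finite {f : α ≃. α} (hf : {a | (f a).isSome}.Finite) : f.supp.Finite := by
  refine hf.union ((hf.image fun a => (f a).getD a).subset fun b hb => ?_)
  obtain ⟨a, ha⟩ := Option.isSome_iff_exists.1 hb
  have hfa := (eq_some_iff f).1 ha
  exact ⟨a, by simp [hfa], by simp [hfa]⟩

def zpow (f : α ≃. α) : ℤ → α ≃. α
  | (n : ℕ) => f ^ n
  | Int.negSucc n => f.symm ^ (n + 1)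

theorem zpow_negSucc (f : α ≃. α) (n : ℕ) : f.zpow (Int.negSucc n) = f.symm ^ (n + 1) := rfl

theorem zpow_mono {f g : α ≃. α} (h : f ≤ g) (k : ℤ) : f.zpow k ≤ g.zpow k := by
  cases k with
  | ofNat n => exact pow_le_pow_left' h n
  | negSucc n => exact pow_le_pow_left' (symm_le_symm h) (n + 1)

theorem zpow_symm (f : α ≃. α) (k : ℤ) : f.symm.zpow k = f.zpow (-k) := by
  rcases k with (_ | n) | n
  · rfl
  · rw [Int.ofNat_eq_natCast, Int.neg_ofNat_succ]
    rfl
  · rw [Int.neg_negSucc]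
    rfl

theorem mem_supp_of_zpow_eq_some {f : α ≃. α} {k : ℤ} (hk : k ≠ 0) {a b : α}
    (h : f.zpow k a = some b) : a ∈ f.supp ∧ b ∈ f.supp := by
  rcases k with (_ | n) | n
  · exact absurd rfl hk
  · exact mem_supp_of_pow_eq_some h
  · rw [← supp_symm]
    exact mem_supp_of_pow_eq_some h

structure IsSinkExtension (s t : α ≃. α) (c : α) : Prop where
  le : s ≤ t
  apply_sink : t c = none
  eq_some_of_ne : ∀ {a b}, t a = some b → b ≠ c → s a = some b

namespace IsSinkExtension

variable {s t : α ≃. α} {c : α}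

theorem pow_eq_some_of_ne (h : IsSinkExtension s t c) {n : ℕ} {a b : α}
    (hab : (t ^ n) a = some b) (hb : b ≠ c) : (s ^ n) a = some b := by
  induction n generalizing b with
  | zero => exact hab
  | succ n ih =>
    obtain ⟨x, hx, hxb⟩ := mul_apply_eq_some.1 (pow_succ' t n ▸ hab)
    have hxc : x ≠ c := by
      rintro rfl
      rw [h.apply_sink] at hxb
      cases hxb
    exact pow_succ' s n ▸ mul_apply_eq_some.2 ⟨x, ih hx hxc, h.eq_some_of_ne hxb hb⟩

theorem zpow_eq_some_of_ne (h : IsSinkExtension s t c) {k : ℤ} {a b : α}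
    (hab : t.zpow k a = some b) (ha : a ≠ c) (hb : b ≠ c) : s.zpow k a = some b := by
  cases k with
  | ofNat n => exact h.pow_eq_some_of_ne hab hb
  | negSucc n =>
    rw [zpow_negSucc, ← symm_pow, eq_some_iff] at hab ⊢
    exact h.pow_eq_some_of_ne hab ha

theorem zpow_apply_sink_ne (h : IsSinkExtension s t c) {k : ℤ} (hk : k ≠ 0) :
    t.zpow k c ≠ some c := by
  rcases k with (_ | n) | n
  · exact absurd rfl hk
  · simp [zpow, pow_succ_apply_eq_none h.apply_sink]
  · rw [zpow_negSucc, ← symm_pow, Ne, eq_some_iff, pow_succ_apply_eq_none h.apply_sink]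
    simp

theorem zpow_eq_some_self (h : IsSinkExtension s t c) {k : ℤ} (hk : k ≠ 0) {a : α}
    (ha : t.zpow k a = some a) : s.zpow k a = some a := by
  have hac : a ≠ c := by
    rintro rfl
    exact h.zpow_apply_sink_ne hk ha
  exact h.zpow_eq_some_of_ne ha hac hac

end IsSinkExtension

/-- `g_l * f ^ k_l * ⋯ * g_0 * f ^ k_0` for `bs = [(g_l, k_l), …, (g_0, k_0)]`: the head of
the list is applied last. -/
def evalBlocks (bs : List (Equiv.Perm α × ℤ)) (f : α ≃. α) : α ≃. α :=
  (bs.map fun b => b.1.toPEquiv * f.zpow b.2).prod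

theorem evalBlocks_nil (f : α ≃. α) : evalBlocks [] f = 1 := rfl

theorem evalBlocks_cons (b : Equiv.Perm α × ℤ) (bs : List (Equiv.Perm α × ℤ)) (f : α ≃. α) :
    evalBlocks (b :: bs) f = b.1.toPEquiv * f.zpow b.2 * evalBlocks bs f := rfl

theorem evalBlocks_symm (bs : List (Equiv.Perm α × ℤ)) (f : α ≃. α) :
    evalBlocks bs f.symm = evalBlocks (bs.map fun b => (b.1, -b.2)) f := by
  simp [evalBlocks, zpow_symm, Function.comp_def]

theorem evalBlocks_mono (bs : List (Equiv.Perm α × ℤ)) {f g : α ≃. α} (h : f ≤ g) :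
    evalBlocks bs f ≤ evalBlocks bs g :=
  List.prod_le_prod' fun b _ => mul_le_mul_right (zpow_mono h b.2) _

def IsolatesSink (t : α ≃. α) (c : α) (b : Equiv.Perm α × ℤ) : Prop :=
  b.2 ≠ 0 ∧ b.1 c ∉ t.supp ∧ b.1.symm c ∉ t.supp

variable {s t : α ≃. α} {c : α}

theorem IsolatesSink.mem_supp_and_ne_of_block {b : Equiv.Perm α × ℤ} (hb : IsolatesSink t c b)
    {a r : α} (har : (b.1.toPEquiv * t.zpow b.2) a = some r) : a ∈ t.supp ∧ r ≠ c := by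
  obtain ⟨x, hx, hxr⟩ := mul_apply_eq_some.1 har
  rw [Equiv.toPEquiv_apply, Option.some_inj] at hxr
  subst hxr
  obtain ⟨ha, hx⟩ := mem_supp_of_zpow_eq_some hb.1 hx
  refine ⟨ha, fun hxc => hb.2.2 ?_⟩
  rwa [← hxc, Equiv.symm_apply_apply]

theorem IsolatesSink.mem_supp_and_ne_of_evalBlocks {bs : List (Equiv.Perm α × ℤ)}
    (hbs : ∀ b ∈ bs, IsolatesSink t c b) (hne : bs ≠ []) {a r : α}
    (har : evalBlocks bs t a = some r) : a ∈ t.supp ∧ r ≠ c := by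
  induction bs generalizing r with
  | nil => exact absurd rfl hne
  | cons b bs ih =>
    rw [evalBlocks_cons, mul_apply_eq_some] at har
    obtain ⟨x, hx, hxr⟩ := har
    obtain ⟨hx', hrc⟩ := (hbs b List.mem_cons_self).mem_supp_and_ne_of_block hxr
    refine ⟨?_, hrc⟩
    rcases eq_or_ne bs [] with rfl | hbs'
    · rw [evalBlocks_nil, one_apply, Option.some_inj] at hx
      rwa [hx]
    · exact (ih (fun b' hb' => hbs b' (List.mem_cons_of_mem b hb')) hbs' hx).1

namespace IsSinkExtension

theorem block_eq_some_of_ne (h : IsSinkExtension s t c) {b : Equiv.Perm α × ℤ}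
    (hb : IsolatesSink t c b) {a r : α} (har : (b.1.toPEquiv * t.zpow b.2) a = some r)
    (hac : a ≠ c) (hr : r ∈ t.supp) : (b.1.toPEquiv * s.zpow b.2) a = some r := by
  obtain ⟨x, hx, hxr⟩ := mul_apply_eq_some.1 har
  refine mul_apply_eq_some.2 ⟨x, h.zpow_eq_some_of_ne hx hac ?_, hxr⟩
  rintro rfl
  rw [Equiv.toPEquiv_apply, Option.some_inj] at hxr
  exact hb.2.1 (hxr ▸ hr)

theorem evalBlocks_eq_some_of_ne (h : IsSinkExtension s t c) {bs : List (Equiv.Perm α × ℤ)}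
    (hbs : ∀ b ∈ bs, IsolatesSink t c b) {a r : α} (hac : a ≠ c) (hr : r ∈ t.supp)
    (har : evalBlocks bs t a = some r) : evalBlocks bs s a = some r ∧ r ≠ c := by
  induction bs generalizing r with
  | nil =>
    obtain rfl : a = r := Option.some_inj.1 har
    exact ⟨har, hac⟩
  | cons b bs ih =>
    rw [evalBlocks_cons, mul_apply_eq_some] at har
    obtain ⟨x, hx, hxr⟩ := har
    have hb := hbs b List.mem_cons_self
    obtain ⟨hx', hrc⟩ := hb.mem_supp_and_ne_of_block hxr
    obtain ⟨hsx, hxc⟩ := ih (fun b' hb' => hbs b' (List.mem_cons_of_mem b hb')) hx' hx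
    rw [evalBlocks_cons, mul_apply_eq_some]
    exact ⟨⟨x, hsx, h.block_eq_some_of_ne hb hxr hxc hr⟩, hrc⟩

theorem evalBlocks_eq_some_self (h : IsSinkExtension s t c) {bs : List (Equiv.Perm α × ℤ)}
    (hbs : ∀ b ∈ bs, IsolatesSink t c b) (hne : bs ≠ []) {a : α}
    (ha : evalBlocks bs t a = some a) : evalBlocks bs s a = some a :=
  have ⟨hmem, hac⟩ := IsolatesSink.mem_supp_and_ne_of_evalBlocks hbs hne ha
  (h.evalBlocks_eq_some_of_ne hbs hac hmem ha).1

end IsSinkExtension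

section Extension

variable [DecidableEq α] {s t : α ≃. α} {n m : α}

theorem exists_eq_ite (hn : s n = none) (hm : s.symm m = none) :
    ∃ t : α ≃. α, ∀ k, t k = if k = n then some m else s k := by
  refine ⟨⟨fun k => if k = n then some m else s k,
    fun k => if k = m then some n else s.symm k, fun a b => ?_⟩, fun _ => rfl⟩
  by_cases hb : b = m <;> by_cases ha : a = n
  · simp [ha, hb]
  · subst hb
    simp only [if_true, if_neg ha, Option.some_inj]
    exact ⟨fun h => absurd h.symm ha, fun h => by simp [(eq_some_iff s).2 h] at hm⟩
  · subst ha
    simp only [if_true, if_neg hb, Option.some_inj]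
    exact ⟨fun h => by simp [(eq_some_iff s).1 h] at hn, fun h => absurd h.symm hb⟩
  · simp only [if_neg ha, if_neg hb]
    exact eq_some_iff s

theorem setOf_isSome_subset_of_eq_ite (ht : ∀ k, t k = if k = n then some m else s k) :
    {k | (t k).isSome} ⊆ insert n {k | (s k).isSome} := by
  intro k hk
  by_cases hkn : k = n
  · exact Or.inl hkn
  · exact Or.inr (by simpa [ht, hkn] using hk)

theorem symm_eq_some_iff_of_eq_ite (ht : ∀ k, t k = if k = n then some m else s k) {a b : α} :
    t.symm a = some b ↔ b = n ∧ a = m ∨ b ≠ n ∧ s b = some a := by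
  rw [eq_some_iff, ht]
  by_cases hbn : b = n <;> simp [hbn, eq_comm]

theorem le_of_eq_ite (ht : ∀ k, t k = if k = n then some m else s k)
    (hn : s n = none) : s ≤ t := by
  simp only [le_def, Option.mem_def]
  intro a b hab
  rw [ht, if_neg (by rintro rfl; simp [hn] at hab)]
  exact hab

theorem supp_subset_of_eq_ite (ht : ∀ k, t k = if k = n then some m else s k) :
    t.supp ⊆ insert m (insert n s.supp) := by
  rintro a (ha | ha)
  · by_cases han : a = n
    · exact Or.inr (Or.inl han)
    · exact Or.inr (Or.inr (Or.inl (by simpa [ht, han] using ha)))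
  · obtain ⟨b, hb⟩ := Option.isSome_iff_exists.1 ha
    rcases (symm_eq_some_iff_of_eq_ite ht).1 hb with ⟨-, rfl⟩ | ⟨-, hb⟩
    · exact Or.inl rfl
    · exact Or.inr (Or.inr (Or.inr (by simp [(eq_some_iff s).2 hb])))

theorem isSinkExtension_of_eq_ite (ht : ∀ k, t k = if k = n then some m else s k)
    (hn : s n = none) (hm : m ∉ insert n s.supp) :
    IsSinkExtension s t m := by
  rw [Set.mem_insert_iff, not_or, notMem_supp] at hm
  refine ⟨le_of_eq_ite ht hn, by rw [ht, if_neg hm.1, hm.2.1], fun {a b} hab hbm => ?_⟩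
  rw [ht] at hab
  split_ifs at hab
  · exact absurd (Option.some_inj.1 hab).symm hbm
  · exact hab

theorem isSinkExtension_symm_of_eq_ite (ht : ∀ k, t k = if k = n then some m else s k)
    (hn : n ∉ insert m s.supp) :
    IsSinkExtension s.symm t.symm n := by
  rw [Set.mem_insert_iff, not_or, notMem_supp] at hn
  refine ⟨symm_le_symm (le_of_eq_ite ht hn.2.1), ?_, fun {a b} hab hbn => ?_⟩
  · rw [Option.eq_none_iff_forall_ne_some]
    intro b hb
    rcases (symm_eq_some_iff_of_eq_ite ht).1 hb with ⟨-, rfl⟩ | ⟨-, hb⟩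
    · exact hn.1 rfl
    · simp [(eq_some_iff s).2 hb] at hn
  · rcases (symm_eq_some_iff_of_eq_ite ht).1 hab with ⟨hbn', -⟩ | ⟨-, hb⟩
    · exact absurd hbn' hbn
    · exact (eq_some_iff s).2 hb

end Extension

/-- The possible shapes of `s ↦ ρ[s](w)` for a nice word `w`. -/
def IsNiceEval (F : (α ≃. α) → α ≃. α) : Prop :=
  (∃ k ≠ 0, F = fun f => f.zpow k) ∨
  ∃ bs : List (Equiv.Perm α × ℤ), bs ≠ [] ∧
    (∀ b ∈ bs, (Function.fixedPoints b.1).Finite ∧ b.2 ≠ 0) ∧ F = evalBlocks bs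

theorem IsNiceEval.comp_symm {F : (α ≃. α) → α ≃. α} (hF : IsNiceEval F) :
    IsNiceEval fun f => F f.symm := by
  rcases hF with ⟨k, hk, rfl⟩ | ⟨bs, hne, hbs, rfl⟩
  · exact Or.inl ⟨-k, neg_ne_zero.2 hk, funext fun f => zpow_symm f k⟩
  · refine Or.inr ⟨bs.map fun b => (b.1, -b.2), by simpa using hne, ?_,
      funext fun f => evalBlocks_symm bs f⟩
    simp only [List.mem_map]
    rintro _ ⟨b, hb, rfl⟩
    exact ⟨(hbs b hb).1, neg_ne_zero.2 (hbs b hb).2⟩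

theorem eventually_apply_notMem_insert {S : Set α} (hS : S.Finite) {g : Equiv.Perm α}
    (hg : (Function.fixedPoints g).Finite) :
    ∀ᶠ c in Filter.cofinite, g c ∉ insert c S ∧ g.symm c ∉ insert c S := by
  have hB : (g ⁻¹' S ∪ g.symm ⁻¹' S ∪ Function.fixedPoints g).Finite :=
    ((hS.preimage g.injective.injOn).union (hS.preimage g.symm.injective.injOn)).union hg
  filter_upwards [hB.eventually_cofinite_notMem] with c hc
  have hgc : g c ≠ c := fun h => hc (Or.inr h)
  have hgc' : g.symm c ≠ c := fun h => hgc (by rw [← h, Equiv.apply_symm_apply, h])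
  simp only [Set.mem_union, Set.mem_preimage, not_or] at hc
  simp [hgc, hgc', hc.1.1, hc.1.2]

theorem IsNiceEval.eventually_fixed_iff {F : (α ≃. α) → α ≃. α} (hF : IsNiceEval F)
    {S : Set α} (hS : S.Finite) :
    ∀ᶠ c in Filter.cofinite, ∀ s t, IsSinkExtension s t c → t.supp ⊆ insert c S →
      ∀ a, F s a = some a ↔ F t a = some a := by
  rcases hF with ⟨k, hk, rfl⟩ | ⟨bs, hne, hbs, rfl⟩
  · exact .of_forall fun c s t h _ a =>
      ⟨fun ha => le_def.1 (zpow_mono h.le k) a a ha, h.zpow_eq_some_self hk⟩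
  · filter_upwards [bs.finite_toSet.eventually_all.2 fun b hb =>
      eventually_apply_notMem_insert hS (hbs b hb).1] with c hc s t h hsupp a
    have hiso : ∀ b ∈ bs, IsolatesSink t c b := fun b hb =>
      ⟨(hbs b hb).2, fun h' => (hc b hb).1 (hsupp h'), fun h' => (hc b hb).2 (hsupp h')⟩
    exact ⟨fun ha => le_def.1 (evalBlocks_mono bs h.le) a a ha,
      h.evalBlocks_eq_some_self hiso hne⟩

end PEquiv

namespace FreeGroup

variable {α β : Type*} [DecidableEq α] [DecidableEq β] {f : α → β}

theorem reduce_map (hf : Function.Injective f) (L : List (α × Bool)) :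
    reduce (L.map fun x => (f x.1, x.2)) = (reduce L).map fun x => (f x.1, x.2) := by
  induction L with
  | nil => rfl
  | cons x L ih =>
    rw [List.map_cons, reduce.cons, reduce.cons, ih]
    cases reduce L with
    | nil => rfl
    | cons y L' =>
      simp only [List.map_cons, hf.eq_iff]
      split_ifs <;> rfl

theorem toWord_map (hf : Function.Injective f) (x : FreeGroup α) :
    (map f x).toWord = x.toWord.map fun a => (f a.1, a.2) := by
  conv_lhs => rw [← mk_toWord (x := x)]
  rw [map.mk, toWord_mk, reduce_map hf, reduce_toWord]

end FreeGroup

section Words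

variable {A : Type*} [DecidableEq A] (ρ : A → Equiv.Perm ℕ) (s : ℕ ≃. ℕ)

theorem wordEval_eq_prod (w : FreeGroup (A ⊕ Unit)) :
    wordEval ρ s w = (w.toWord.map (evalLetter ρ s)).prod := by
  rw [wordEval, List.prod, List.foldr_map]
  rfl

theorem prod_evalLetter_toWord_xgen_zpow (k : ℤ) :
    ((xgen A ^ k).toWord.map (evalLetter ρ s)).prod = s.zpow k := by
  cases k with
  | ofNat n =>
    rw [Int.ofNat_eq_natCast, zpow_natCast, xgen, FreeGroup.toWord_of_pow, List.map_replicate,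
      List.prod_replicate]
    rfl
  | negSucc n =>
    rw [zpow_negSucc, FreeGroup.toWord_inv, xgen, FreeGroup.toWord_of_pow]
    simp only [FreeGroup.invRev, List.map_replicate, Bool.not_true, List.reverse_replicate,
      List.prod_replicate, PEquiv.zpow_negSucc]
    rfl

theorem prod_evalLetter_toWord_embA (u : FreeGroup A) :
    ((embA A u).toWord.map (evalLetter ρ s)).prod = (FreeGroup.lift ρ u).toPEquiv := by
  conv_rhs => rw [← FreeGroup.mk_toWord (x := u), FreeGroup.lift_mk]
  rw [embA, FreeGroup.toWord_map Sum.inl_injective]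
  change _ = Equiv.Perm.toPEquivHom _
  rw [map_list_prod, List.map_map, List.map_map]
  congr 1
  refine List.map_congr_left fun ⟨a, b⟩ _ => ?_
  cases b <;> rfl

end Words

theorem isNiceEval_wordEval {A : Type*} [DecidableEq A] {ρ : A → Equiv.Perm ℕ}
    (hρ : IsCofinitaryRep ρ) {w : FreeGroup (A ⊕ Unit)} (hw : NiceWord ρ w) :
    PEquiv.IsNiceEval (wordEval ρ · w) := by
  rcases hw with ⟨k, hk, rfl⟩ | ⟨l, u, k, hu, hk, hw⟩
  · refine Or.inl ⟨k, hk, funext fun s => ?_⟩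
    rw [wordEval_eq_prod, prod_evalLetter_toWord_xgen_zpow]
  · refine Or.inr ⟨List.ofFn fun i => (FreeGroup.lift ρ (u i), k i), by simp, ?_,
      funext fun s => ?_⟩
    · simp only [List.mem_ofFn, forall_exists_index]
      rintro _ i rfl
      exact ⟨(hρ (u i)).resolve_left (hu i), hk i⟩
    · rw [wordEval_eq_prod, hw, List.map_flatten, List.prod_flatten, PEquiv.evalBlocks,
        List.map_ofFn, List.map_ofFn, List.map_ofFn]
      congr 2
      funext i
      simp [List.prod_append, prod_evalLetter_toWord_embA, prod_evalLetter_toWord_xgen_zpow]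

/-- Domain/range extension for finite partial injections: if `ρ` induces a cofinitary
representation, `s` is a finite partial injection and `W₀` is a finite set of nice words,
then (1) for `n ∉ dom(s)` and all but finitely many `m`, `t := s ∪ {(n, m)}` is a finite
partial injection with `fix(ρ[s](w)) = fix(ρ[t](w))` for all `w ∈ W₀`; and (2) for
`m ∉ ran(s)` and all but finitely many `n`, the same holds. -/
theorem extend_domain_range {A : Type*} [DecidableEq A] (ρ : A → Equiv.Perm ℕ)
    (hρ : IsCofinitaryRep ρ) (s : ℕ ≃. ℕ)
    (hs : {k : ℕ | (s k).isSome = true}.Finite)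
    (W₀ : Set (FreeGroup (A ⊕ Unit))) (hW₀fin : W₀.Finite)
    (hW₀ : ∀ w ∈ W₀, NiceWord ρ w) :
    (∀ n : ℕ, s n = none →
      ∀ᶠ m in Filter.cofinite, ∃ t : ℕ ≃. ℕ,
        {k : ℕ | (t k).isSome = true}.Finite ∧
        (∀ k, t k = if k = n then some m else s k) ∧
        ∀ w ∈ W₀, pFix (wordEval ρ s w) = pFix (wordEval ρ t w)) ∧
    (∀ m : ℕ, s.symm m = none →
      ∀ᶠ n in Filter.cofinite, ∃ t : ℕ ≃. ℕ,
        {k : ℕ | (t k).isSome = true}.Finite ∧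
        (∀ k, t k = if k = n then some m else s k) ∧
        ∀ w ∈ W₀, pFix (wordEval ρ s w) = pFix (wordEval ρ t w)) := by
  open PEquiv in
  have hnice : ∀ w ∈ W₀, IsNiceEval (wordEval ρ · w) := fun w hw =>
    isNiceEval_wordEval hρ (hW₀ w hw)
  constructor
  · intro n hn
    have hS := (supp_finite hs).insert n
    filter_upwards [hW₀fin.eventually_all.2 fun w hw => (hnice w hw).eventually_fixed_iff hS,
      hS.eventually_cofinite_notMem] with m hfix hm
    obtain ⟨t, ht⟩ := exists_eq_ite hn (notMem_supp.1 fun h => hm (Or.inr h)).2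
    exact ⟨t, (hs.insert n).subset (setOf_isSome_subset_of_eq_ite ht), ht, fun w hw =>
      Set.ext (hfix w hw s t (isSinkExtension_of_eq_ite ht hn hm) (supp_subset_of_eq_ite ht))⟩
  · intro m hm
    have hS := (supp_finite hs).insert m
    filter_upwards [hW₀fin.eventually_all.2 fun w hw =>
        (hnice w hw).comp_symm.eventually_fixed_iff hS,
      hS.eventually_cofinite_notMem] with n hfix hn
    obtain ⟨t, ht⟩ := exists_eq_ite (notMem_supp.1 fun h => hn (Or.inr h)).1 hm
    refine ⟨t, (hs.insert n).subset (setOf_isSome_subset_of_eq_ite ht), ht, fun w hw =>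
      Set.ext (hfix w hw s.symm t.symm (isSinkExtension_symm_of_eq_ite ht hn) ?_)⟩
    rw [supp_symm, Set.insert_comm]
    exact supp_subset_of_eq_ite ht
end
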